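/- In the merge branch evaluation of a nested justification system whose nesting structure forms a tree, for every infinite branch b there is a unique system JS' among the root and its descendants such that (a) b contains infinitely many occurrences of facts defined locally in JS' and (b) no ancestor of JS' satisfies (a). Uniqueness holds because if a branch has infinitely many occurrences of facts defined locally in two incomparable systems, it must also pass infinitely often through facts of a common ancestor. -/

import Mathlib

/-!
Call a system recurrent if the branch visits it infinitely often. Since there are finitely many
systems, some system is recurrent, and a minimal recurrent one exists. For uniqueness, the
recurrent systems are downward directed: between a visit to `s` and a later visit to `t` the
branch only moves between comparable systems, and because the ancestors of a node form a chain,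
the lowest system seen so far stays below the current one; hence the branch passes through a
common ancestor of `s` and `t` infinitely often, and by pigeonhole one such ancestor is itself
recurrent. Two minimal recurrent systems thus both equal that common ancestor.
-/

theorem Set.Infinite.exists_infinite_inter_fiber {ι σ : Type*} [Finite σ] {A : Set ι}
    (hA : A.Infinite) (f : ι → σ) : ∃ u, (A ∩ f ⁻¹' {u}).Infinite := by
  by_contra! hfin
  exact hA ((Set.finite_iUnion hfin).subset fun k hk => Set.mem_iUnion.2 ⟨f k, hk, rfl⟩)

section Branch

variable {σ : Type*} [PartialOrder σ] {f : ℕ → σ}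

theorem exists_mem_Icc_le_le_of_comparable_succ
    (htree : ∀ s : σ, IsChain (· ≤ ·) (Set.Iic s))
    (hstep : ∀ k, f k ≤ f (k + 1) ∨ f (k + 1) ≤ f k) {i j : ℕ} (hij : i ≤ j) :
    ∃ m ∈ Set.Icc i j, f m ≤ f i ∧ f m ≤ f j := by
  induction j, hij using Nat.le_induction with
  | base => exact ⟨i, ⟨le_rfl, le_rfl⟩, le_rfl, le_rfl⟩
  | succ j hij ih =>
    obtain ⟨m, ⟨him, hmj⟩, hmi, hm⟩ := ih
    have hm_succ : m ∈ Set.Icc i (j + 1) := ⟨him, hmj.trans j.le_succ⟩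
    rcases hstep j with hup | hdown
    · exact ⟨m, hm_succ, hmi, hm.trans hup⟩
    · rcases (htree (f j)).total hm hdown with hle | hge
      · exact ⟨m, hm_succ, hmi, hle⟩
      · exact ⟨j + 1, ⟨hij.trans j.le_succ, le_rfl⟩, hge.trans hmi, le_rfl⟩

theorem infinite_setOf_le_le_of_comparable_succ
    (htree : ∀ s : σ, IsChain (· ≤ ·) (Set.Iic s))
    (hstep : ∀ k, f k ≤ f (k + 1) ∨ f (k + 1) ≤ f k) {s t : σ}
    (hs : (f ⁻¹' {s}).Infinite) (ht : (f ⁻¹' {t}).Infinite) :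
    {m | f m ≤ s ∧ f m ≤ t}.Infinite := by
  refine Set.infinite_of_forall_exists_gt fun n => ?_
  obtain ⟨i, rfl : f i = s, hni⟩ := hs.exists_gt n
  obtain ⟨j, rfl : f j = t, hij⟩ := ht.exists_gt i
  obtain ⟨m, ⟨him, -⟩, hmi, hmj⟩ :=
    exists_mem_Icc_le_le_of_comparable_succ htree hstep hij.le
  exact ⟨m, ⟨hmi, hmj⟩, hni.trans_le him⟩

theorem exists_infinite_fiber_le_le_of_comparable_succ [Finite σ]
    (htree : ∀ s : σ, IsChain (· ≤ ·) (Set.Iic s))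
    (hstep : ∀ k, f k ≤ f (k + 1) ∨ f (k + 1) ≤ f k) {s t : σ}
    (hs : (f ⁻¹' {s}).Infinite) (ht : (f ⁻¹' {t}).Infinite) :
    ∃ u, (f ⁻¹' {u}).Infinite ∧ u ≤ s ∧ u ≤ t := by
  obtain ⟨u, hu⟩ :=
    (infinite_setOf_le_le_of_comparable_succ htree hstep hs ht).exists_infinite_inter_fiber f
  obtain ⟨k, hk, rfl : f k = u⟩ := hu.nonempty
  exact ⟨f k, hu.mono Set.inter_subset_right, hk⟩

theorem existsUnique_minimal_infinite_fiber [Finite σ]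
    (htree : ∀ s : σ, IsChain (· ≤ ·) (Set.Iic s))
    (hstep : ∀ k, f k ≤ f (k + 1) ∨ f (k + 1) ≤ f k) :
    ∃! s, Minimal (fun s => (f ⁻¹' {s}).Infinite) s := by
  obtain ⟨s₀, hs₀⟩ := Set.infinite_univ.exists_infinite_inter_fiber f
  obtain ⟨s, hs⟩ := exists_minimal_of_wellFoundedLT (fun s => (f ⁻¹' {s}).Infinite)
    ⟨s₀, hs₀.mono Set.inter_subset_right⟩
  refine ⟨s, hs, fun t ht => ?_⟩
  obtain ⟨u, hu, hus, hut⟩ :=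
    exists_infinite_fiber_le_le_of_comparable_succ htree hstep hs.prop ht.prop
  exact (ht.eq_of_le hu hut).symm.trans (hs.eq_of_le hu hus)

end Branch

theorem merge_unique_system_general {α σ : Type*} [Fintype σ] [PartialOrder σ]
    (htree : ∀ s : σ, IsChain (· ≤ ·) {t | t ≤ s})
    (loc : α → σ)        -- the system in which each fact is locally defined
    (b : ℕ → α)
    -- consecutive facts are defined in ancestor-or-descendant systems
    (hstep : ∀ k, loc (b k) ≤ loc (b (k + 1)) ∨ loc (b (k + 1)) ≤ loc (b k)) :
    ∃! s : σ, {k : ℕ | loc (b k) = s}.Infinite ∧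
      ∀ s', s' < s → ¬ {k : ℕ | loc (b k) = s'}.Infinite := by
  obtain ⟨s, hs, huniq⟩ :=
    existsUnique_minimal_infinite_fiber (f := fun k => loc (b k)) htree hstep
  exact ⟨s, minimal_iff_forall_lt.1 hs, fun t ht => huniq t (minimal_iff_forall_lt.2 ht)⟩

/-- In the merge branch evaluation of a nested justification system whose
nesting structure forms a tree, for every infinite branch `b` there is a unique
system `s` (among the root and its descendants, ordered by the ancestor
relation `≤`, where ancestors of any node form a chain and there is a root
below everything) such that (a) `b` contains infinitely many occurrences of
facts defined locally in `s`, and (b) no strict ancestor of `s` satisfies (a). -/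
theorem merge_unique_system {α σ : Type*} [Fintype σ] [PartialOrder σ]
    (htree : ∀ s : σ, IsChain (· ≤ ·) {t | t ≤ s})
    (hroot : ∃ r : σ, ∀ s, r ≤ s)
    (loc : α → σ)        -- the system in which each fact is locally defined
    (b : ℕ → α)
    -- consecutive facts are defined in ancestor-or-descendant systems
    (hstep : ∀ k, loc (b k) ≤ loc (b (k + 1)) ∨ loc (b (k + 1)) ≤ loc (b k)) :
    ∃! s : σ, {k : ℕ | loc (b k) = s}.Infinite ∧
      ∀ s', s' < s → ¬ {k : ℕ | loc (b k) = s'}.Infinite :=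
  merge_unique_system_general htree loc b hstep
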